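/- Let w ∈ ℂ with 0 < |w| < 1 and set q = w². Then 2·Σ_{n≥0} Σ_{j=0}^{n} (-1)^j q^{n²+n+j(j+1)/2} / ((-q;q)_n · (q;q)_{n-j} · (q;q)_j · (1 - q^{2j+1})) = A(w) + A(-w), where A(x) = Σ_{n≥0} x^{2n²+2n} / (-x;x)_{2n+1}. (Here j(j+1)/2 is an integer, so q^{j(j+1)/2} = w^{j(j+1)} is well defined.) -/

import Mathlib

/-- Finite q-Pochhammer symbol `(x;q)_n = ∏_{i=0}^{n-1} (1 - x q^i)`. -/
noncomputable def qPoch (x q : ℂ) (n : ℕ) : ℂ :=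
  ∏ i ∈ Finset.range n, (1 - x * q ^ i)

/-- The mock theta function `A(x) = Σ_{n≥0} x^{2n²+2n}/(-x;x)_{2n+1}`. -/
noncomputable def mockA (x : ℂ) : ℂ :=
  ∑' n : ℕ, x ^ (2 * n ^ 2 + 2 * n) / qPoch (-x) x (2 * n + 1)

/-!
Writing `q = w²`, the `n`-th inner sum is `q^(n²+n)/(-q;q)_n` times
`Σ_j (-1)^j q^(j(j+1)/2) / ((q;q)_(n-j) (q;q)_j (1 - q^(2j+1)))`. Splitting
`2/(1 - q^(2j+1)) = 1/(1 - w q^j) + 1/(1 + w q^j)` turns twice this sum into two instances,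
`a = ±w`, of the partial fraction expansion
`Σ_j (-1)^j q^(j(j+1)/2) / ((q;q)_(n-j) (q;q)_j (1 - a q^j)) = 1/(a;q)_(n+1)`,
which follows by induction on `n`: the error term of the induction step is a multiple of the
alternating sum `Σ_j (-1)^j q^(j(j-1)/2) / ((q;q)_(N-j) (q;q)_j)`, which vanishes for `N ≥ 1`.
Separating even and odd factors, `(-q;q)_n (-w;q)_(n+1) = (-w;w)_(2n+1)` and
`(-q;q)_n (w;q)_(n+1) = (w;-w)_(2n+1)`, so the `n`-th term becomes the sum of the `n`-th terms
of `A(w)` and `A(-w)`; both series converge since their terms decay like `|w|^(2n²)`.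
-/

open Finset

section QPochhammer

variable {a q : ℂ}

lemma qPoch_succ (a q : ℂ) (n : ℕ) : qPoch a q (n + 1) = qPoch a q n * (1 - a * q ^ n) :=
  prod_range_succ _ _

lemma qPoch_self_succ (q : ℂ) (n : ℕ) : qPoch q q (n + 1) = qPoch q q n * (1 - q ^ (n + 1)) := by
  rw [qPoch_succ, ← pow_succ']

lemma qPoch_two_mul_add_one (a q : ℂ) (n : ℕ) :
    qPoch a q (2 * n + 1) = qPoch a (q ^ 2) (n + 1) * qPoch (a * q) (q ^ 2) n := by
  induction n with
  | zero => simp [qPoch]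
  | succ n ih =>
    rw [show 2 * (n + 1) + 1 = 2 * n + 1 + 1 + 1 by ring, qPoch_succ, qPoch_succ, ih,
      qPoch_succ a _ (n + 1), qPoch_succ (a * q)]
    ring

lemma one_sub_pow_succ_ne_zero (hq : ∀ k, qPoch q q k ≠ 0) (k : ℕ) : 1 - q ^ (k + 1) ≠ 0 := by
  have := hq (k + 1)
  rw [qPoch_self_succ] at this
  exact right_ne_zero_of_mul this

lemma one_sub_norm_le_norm_one_sub_mul_pow (hq : ‖q‖ ≤ 1) (i : ℕ) :
    1 - ‖a‖ ≤ ‖1 - a * q ^ i‖ := by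
  have hle : ‖a * q ^ i‖ ≤ ‖a‖ := by
    rw [norm_mul, norm_pow]
    exact mul_le_of_le_one_right (norm_nonneg a) (pow_le_one₀ (norm_nonneg q) hq)
  have := norm_sub_norm_le (1 : ℂ) (a * q ^ i)
  rw [norm_one] at this
  linarith

lemma one_sub_mul_pow_ne_zero (ha : ‖a‖ < 1) (hq : ‖q‖ ≤ 1) (i : ℕ) : 1 - a * q ^ i ≠ 0 :=
  norm_pos_iff.1 <| (sub_pos.2 ha).trans_le (one_sub_norm_le_norm_one_sub_mul_pow hq i)

lemma qPoch_ne_zero (ha : ‖a‖ < 1) (hq : ‖q‖ ≤ 1) (n : ℕ) : qPoch a q n ≠ 0 :=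
  prod_ne_zero_iff.2 fun i _ => one_sub_mul_pow_ne_zero ha hq i

lemma one_sub_norm_pow_le_norm_qPoch (ha : ‖a‖ ≤ 1) (hq : ‖q‖ ≤ 1) (n : ℕ) :
    (1 - ‖a‖) ^ n ≤ ‖qPoch a q n‖ := by
  rw [qPoch, norm_prod]
  calc (1 - ‖a‖) ^ n = ∏ _i ∈ range n, (1 - ‖a‖) := by rw [prod_const, card_range]
    _ ≤ _ := prod_le_prod (fun _ _ => sub_nonneg.2 ha)
      fun i _ => one_sub_norm_le_norm_one_sub_mul_pow hq i

end QPochhammer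

lemma pow_choose_succ_two (q : ℂ) (j : ℕ) : q ^ (j + 1).choose 2 = q ^ j.choose 2 * q ^ j := by
  rw [Nat.choose_succ_succ' j 1, Nat.choose_one_right, pow_add, mul_comm]

lemma pow_mul_succ_eq_sq_pow_choose (w : ℂ) (j : ℕ) :
    w ^ (j * (j + 1)) = (w ^ 2) ^ (j + 1).choose 2 := by
  rw [← pow_mul, mul_comm 2, ← Nat.add_one_mul_choose_eq, Nat.choose_one_right, mul_comm]

theorem sum_neg_one_pow_div_qPoch_eq_zero {q : ℂ} (hq : ∀ k, qPoch q q k ≠ 0) (m : ℕ) :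
    ∑ j ∈ range (m + 2), (-1) ^ j * q ^ j.choose 2 / (qPoch q q (m + 1 - j) * qPoch q q j) = 0 := by
  set d : ℕ → ℂ := fun j => (-1) ^ j * q ^ j.choose 2 / (qPoch q q (m + 1 - j) * qPoch q q j)
  -- the q-Pascal rule; the two parts of each term then telescope against each other
  have hsplit : ∀ j ∈ range (m + 2),
      (1 - q ^ (m + 1)) * d j = (1 - q ^ j) * d j + q ^ j * (1 - q ^ (m + 1 - j)) * d j := by
    intro j hj
    have : q ^ j * q ^ (m + 1 - j) = q ^ (m + 1) := by
      rw [← pow_add, Nat.add_sub_cancel' (Nat.lt_succ_iff.1 (mem_range.1 hj))]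
    linear_combination d j * this
  have hlow : ∑ j ∈ range (m + 2), (1 - q ^ j) * d j =
      ∑ j ∈ range (m + 1), (1 - q ^ (j + 1)) * d (j + 1) := by
    simp [sum_range_succ' _ (m + 1)]
  have hhigh : ∑ j ∈ range (m + 2), q ^ j * (1 - q ^ (m + 1 - j)) * d j =
      ∑ j ∈ range (m + 1), q ^ j * (1 - q ^ (m + 1 - j)) * d j := by
    simp [sum_range_succ _ (m + 1)]
  have hcancel : ∀ j ∈ range (m + 1),
      (1 - q ^ (j + 1)) * d (j + 1) + q ^ j * (1 - q ^ (m + 1 - j)) * d j = 0 := by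
    intro j hj
    obtain ⟨k, rfl⟩ : ∃ k, m = j + k := ⟨m - j, by grind⟩
    simp only [d, show j + k + 1 - (j + 1) = k by omega, show j + k + 1 - j = k + 1 by omega,
      pow_choose_succ_two, qPoch_self_succ]
    have := one_sub_pow_succ_ne_zero hq j
    have := one_sub_pow_succ_ne_zero hq k
    have := hq j
    have := hq k
    field_simp
    ring
  have hmul : (1 - q ^ (m + 1)) * ∑ j ∈ range (m + 2), d j = 0 := by
    rw [mul_sum, sum_congr rfl hsplit, sum_add_distrib, hlow, hhigh, ← sum_add_distrib,
      sum_eq_zero hcancel]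
  exact (mul_eq_zero.1 hmul).resolve_left (one_sub_pow_succ_ne_zero hq m)

theorem sum_div_qPoch_mul_one_sub_mul_pow {a q : ℂ} (hq : ∀ k, qPoch q q k ≠ 0)
    (ha : ∀ j, 1 - a * q ^ j ≠ 0) (n : ℕ) :
    ∑ j ∈ range (n + 1), (-1) ^ j * q ^ (j + 1).choose 2 /
        (qPoch q q (n - j) * qPoch q q j * (1 - a * q ^ j)) = 1 / qPoch a q (n + 1) := by
  induction n with
  | zero => simp [qPoch]
  | succ n ih =>
    set t : ℕ → ℕ → ℂ := fun m j => (-1) ^ j * q ^ (j + 1).choose 2 /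
        (qPoch q q (m - j) * qPoch q q j * (1 - a * q ^ j))
    set d : ℕ → ℂ := fun j => (-1) ^ j * q ^ j.choose 2 / (qPoch q q (n + 1 - j) * qPoch q q j)
    have hterm : ∀ j ∈ range (n + 1),
        (1 - a * q ^ (n + 1)) * t (n + 1) j = t n j + q ^ (n + 1) * d j := by
      intro j hj
      obtain ⟨k, rfl⟩ : ∃ k, n = j + k := ⟨n - j, by grind⟩
      -- `1 - a q^(j+k+1) = (1 - q^(k+1)) + q^(k+1) (1 - a q^j)`
      simp only [t, d, show j + k + 1 - j = k + 1 by omega, Nat.add_sub_cancel_left,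
        pow_choose_succ_two, qPoch_self_succ]
      have := one_sub_pow_succ_ne_zero hq k
      have := hq j
      have := hq k
      have := ha j
      field_simp
      ring
    have hlast : (1 - a * q ^ (n + 1)) * t (n + 1) (n + 1) = q ^ (n + 1) * d (n + 1) := by
      simp only [t, d, Nat.sub_self, pow_choose_succ_two]
      have := hq (n + 1)
      have := ha (n + 1)
      field_simp
    have hmul : (1 - a * q ^ (n + 1)) * ∑ j ∈ range (n + 2), t (n + 1) j =
        1 / qPoch a q (n + 1) := by
      rw [mul_sum, sum_range_succ, sum_congr rfl hterm, sum_add_distrib, ← mul_sum, hlast,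
        add_assoc, ← mul_add, ← sum_range_succ d, sum_neg_one_pow_div_qPoch_eq_zero hq n,
        mul_zero, add_zero, ih]
    rw [qPoch_succ _ _ (n + 1), ← div_div, ← hmul, mul_div_cancel_left₀ _ (ha (n + 1))]

section SquareBase

variable {w : ℂ}

lemma norm_sq_lt_one (hw : ‖w‖ < 1) : ‖w ^ 2‖ < 1 := by
  rw [norm_pow]
  exact pow_lt_one₀ (norm_nonneg w) hw two_ne_zero

lemma two_mul_sum_div_one_sub_pow_two_mul_add_one (hw : ‖w‖ < 1) (n : ℕ) :
    2 * ∑ j ∈ range (n + 1), (-1) ^ j * (w ^ 2) ^ (j + 1).choose 2 /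
        (qPoch (w ^ 2) (w ^ 2) (n - j) * qPoch (w ^ 2) (w ^ 2) j * (1 - (w ^ 2) ^ (2 * j + 1))) =
      1 / qPoch w (w ^ 2) (n + 1) + 1 / qPoch (-w) (w ^ 2) (n + 1) := by
  have hq := norm_sq_lt_one hw
  have hqPoch : ∀ k, qPoch (w ^ 2) (w ^ 2) k ≠ 0 := qPoch_ne_zero hq hq.le
  have hplus := one_sub_mul_pow_ne_zero hw hq.le
  have hminus := one_sub_mul_pow_ne_zero (a := -w) (by rwa [norm_neg]) hq.le
  rw [← sum_div_qPoch_mul_one_sub_mul_pow hqPoch hplus,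
    ← sum_div_qPoch_mul_one_sub_mul_pow hqPoch hminus, ← sum_add_distrib, mul_sum]
  refine sum_congr rfl fun j _ => ?_
  have hfactor : 1 - (w ^ 2) ^ (2 * j + 1) = (1 - w * (w ^ 2) ^ j) * (1 + w * (w ^ 2) ^ j) := by
    ring
  have := hqPoch j
  have := hqPoch (n - j)
  have := hplus j
  have := hminus j
  rw [neg_mul, sub_neg_eq_add] at this ⊢
  rw [hfactor]
  generalize w * (w ^ 2) ^ j = x at *
  field_simp
  ring

lemma two_mul_sum_eq_mockA_terms (hw : ‖w‖ < 1) (n : ℕ) :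
    2 * ∑ j ∈ range (n + 1), (-1 : ℂ) ^ j * (w ^ 2) ^ (n ^ 2 + n) * w ^ (j * (j + 1)) /
        (qPoch (-w ^ 2) (w ^ 2) n * qPoch (w ^ 2) (w ^ 2) (n - j) * qPoch (w ^ 2) (w ^ 2) j *
          (1 - (w ^ 2) ^ (2 * j + 1))) =
      w ^ (2 * n ^ 2 + 2 * n) / qPoch (-w) w (2 * n + 1) +
        (-w) ^ (2 * n ^ 2 + 2 * n) / qPoch (-(-w)) (-w) (2 * n + 1) := by
  have hfactor : ∀ j ∈ range (n + 1),
      (-1 : ℂ) ^ j * (w ^ 2) ^ (n ^ 2 + n) * w ^ (j * (j + 1)) /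
        (qPoch (-w ^ 2) (w ^ 2) n * qPoch (w ^ 2) (w ^ 2) (n - j) * qPoch (w ^ 2) (w ^ 2) j *
          (1 - (w ^ 2) ^ (2 * j + 1))) =
      (w ^ 2) ^ (n ^ 2 + n) / qPoch (-w ^ 2) (w ^ 2) n *
        ((-1) ^ j * (w ^ 2) ^ (j + 1).choose 2 /
          (qPoch (w ^ 2) (w ^ 2) (n - j) * qPoch (w ^ 2) (w ^ 2) j *
            (1 - (w ^ 2) ^ (2 * j + 1)))) := by
    intro j _
    rw [pow_mul_succ_eq_sq_pow_choose, div_mul_div_comm]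
    congr 1 <;> ring
  rw [sum_congr rfl hfactor, ← mul_sum, mul_left_comm,
    two_mul_sum_div_one_sub_pow_two_mul_add_one hw, qPoch_two_mul_add_one (-w),
    qPoch_two_mul_add_one (-(-w)), neg_neg, neg_sq, neg_mul, mul_neg, ← sq,
    Even.neg_pow ⟨n ^ 2 + n, by ring⟩, ← pow_mul]
  ring

end SquareBase

lemma summable_mockA_term {x : ℂ} (hx : ‖x‖ < 1) :
    Summable fun n : ℕ => x ^ (2 * n ^ 2 + 2 * n) / qPoch (-x) x (2 * n + 1) := by
  set c := ‖x‖
  have hc : 0 < 1 - c := sub_pos.2 hx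
  obtain ⟨N, hN⟩ : ∃ N, ∀ n ≥ N, c ^ n ≤ (1 - c) ^ 2 / 2 := Filter.eventually_atTop.1 <|
    (tendsto_pow_atTop_nhds_zero_of_lt_one (norm_nonneg x) hx).eventually
      (ge_mem_nhds (by positivity))
  refine .of_norm_bounded_eventually_nat (g := fun n => (1 - c)⁻¹ * (1 / 2) ^ n)
    (summable_geometric_two.mul_left _) ?_
  filter_upwards [Filter.eventually_ge_atTop N] with n hn
  have hden : (1 - c) ^ (2 * n + 1) ≤ ‖qPoch (-x) x (2 * n + 1)‖ := by
    simpa [c] using one_sub_norm_pow_le_norm_qPoch (a := -x) (by simpa using hx.le) hx.le _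
  have hnum : c ^ (2 * n + 2) ≤ (1 - c) ^ 2 / 2 :=
    (pow_le_pow_of_le_one (norm_nonneg x) hx.le (by omega)).trans (hN n hn)
  calc ‖x ^ (2 * n ^ 2 + 2 * n) / qPoch (-x) x (2 * n + 1)‖
      ≤ (c ^ (2 * n + 2)) ^ n / (1 - c) ^ (2 * n + 1) := by
        rw [norm_div, norm_pow, ← pow_mul, show 2 * n ^ 2 + 2 * n = (2 * n + 2) * n by ring]
        gcongr
    _ ≤ ((1 - c) ^ 2 / 2) ^ n / (1 - c) ^ (2 * n + 1) := by gcongr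
    _ = (1 - c)⁻¹ * (1 / 2) ^ n := by
        rw [div_pow, pow_succ _ (2 * n), pow_mul, one_div_pow]
        field_simp

theorem double_sum_mock_A_general (w : ℂ) (h1 : ‖w‖ < 1)
    (q : ℂ) (hq : q = w ^ 2) :
    2 * ∑' n : ℕ, ∑ j ∈ Finset.range (n + 1),
        (-1 : ℂ) ^ j * q ^ (n ^ 2 + n) * w ^ (j * (j + 1)) /
          (qPoch (-q) q n * qPoch q q (n - j) * qPoch q q j * (1 - q ^ (2 * j + 1))) =
      mockA w + mockA (-w) := by
  subst hq
  rw [← tsum_mul_left, tsum_congr (two_mul_sum_eq_mockA_terms h1),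
    (summable_mockA_term h1).tsum_add (summable_mockA_term (by rwa [norm_neg])), mockA, mockA]

/-- Identity (2.13): with `q = w²`,
`2 Σ_{n≥0} Σ_{j=0}^{n} (-1)^j q^{n²+n+j(j+1)/2} / ((-q;q)_n (q;q)_{n-j} (q;q)_j (1-q^{2j+1}))
  = A(w) + A(-w)`, where `q^{j(j+1)/2} = w^{j(j+1)}`. -/
theorem double_sum_mock_A (w : ℂ) (h0 : 0 < ‖w‖) (h1 : ‖w‖ < 1)
    (q : ℂ) (hq : q = w ^ 2) :
    2 * ∑' n : ℕ, ∑ j ∈ Finset.range (n + 1),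
        (-1 : ℂ) ^ j * q ^ (n ^ 2 + n) * w ^ (j * (j + 1)) /
          (qPoch (-q) q n * qPoch q q (n - j) * qPoch q q j * (1 - q ^ (2 * j + 1))) =
      mockA w + mockA (-w) :=
  double_sum_mock_A_general w h1 q hq
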